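/- arXiv:1204.1639 — 3 statements merged into one kernel-verified Lean document; each statement's English description precedes it below -/
import Mathlib

section
/- Let f be a smooth real function defined on a neighborhood of 0 in ℝ with f(0) > 0, and consider the smooth vector field X(x,y) = (2π/f(x²+y²))·(−y, x) on a sufficiently small open disc around the origin in ℝ². Then for every point p ≠ 0 in that disc, the maximal integral curve γ of X with γ(0) = p is defined for all real times, is periodic, and its minimal positive period equals f(‖p‖²), where ‖p‖² = x(p)² + y(p)². -/
open Real

private theorem hd_fst' {f : ℝ → ℝ × ℝ} {v : ℝ × ℝ} {t : ℝ} (h : HasDerivAt f v t) :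
    HasDerivAt (fun s => (f s).1) v.1 t := by
  simpa using h.hasFDerivAt.fst.hasDerivAt

private theorem hd_snd' {f : ℝ → ℝ × ℝ} {v : ℝ × ℝ} {t : ℝ} (h : HasDerivAt f v t) :
    HasDerivAt (fun s => (f s).2) v.2 t := by
  simpa using h.hasFDerivAt.snd.hasDerivAt

private theorem rot_deriv (a b ω t : ℝ) :
    HasDerivAt (fun s => (a * cos (ω*s) - b * sin (ω*s), a * sin (ω*s) + b * cos (ω*s)))
      (ω • (-(a * sin (ω*t) + b * cos (ω*t)), a * cos (ω*t) - b * sin (ω*t))) t := by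
  have hωt : HasDerivAt (fun s => ω*s) ω t := by simpa using (hasDerivAt_id t).const_mul ω
  have hcos : HasDerivAt (fun s => cos (ω*s)) (-sin (ω*t) * ω) t :=
    (Real.hasDerivAt_cos (ω*t)).comp t hωt
  have hsin : HasDerivAt (fun s => sin (ω*s)) (cos (ω*t) * ω) t :=
    (Real.hasDerivAt_sin (ω*t)).comp t hωt
  have h1 := (hcos.const_mul a).sub (hsin.const_mul b)
  have h2 := (hsin.const_mul a).add (hcos.const_mul b)
  convert h1.prodMk h2 using 1
  simp [Prod.smul_def, smul_eq_mul]
  ext <;> simp <;> ring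

/-- For the elliptic normal form `X = (2π/f(x²+y²))·(−y,x)` with `f(0) > 0`,
every point `p ≠ 0` in a small enough disc around the origin lies on a (unique, globally
defined) integral curve of `X` which is periodic with minimal positive period `f(‖p‖²)`,
where `‖p‖² = x(p)² + y(p)²`. -/
theorem elliptic_normal_form_periodic_orbits
    (f : ℝ → ℝ) (U : Set ℝ) (hU : U ∈ nhds (0 : ℝ))
    (hf : ContDiffOn ℝ (⊤ : ℕ∞) f U) (hf0 : 0 < f 0)
    (X : ℝ × ℝ → ℝ × ℝ)
    (hX : ∀ p : ℝ × ℝ, X p = (2 * π / f (p.1 ^ 2 + p.2 ^ 2)) • (-p.2, p.1)) :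
    ∃ ε > (0 : ℝ), ∀ p : ℝ × ℝ, p ∈ Metric.ball (0 : ℝ × ℝ) ε → p ≠ 0 →
      ∃ γ : ℝ → ℝ × ℝ,
        γ 0 = p ∧
        (∀ t : ℝ, HasDerivAt γ (X (γ t)) t) ∧
        (∀ γ' : ℝ → ℝ × ℝ, γ' 0 = p → (∀ t : ℝ, HasDerivAt γ' (X (γ' t)) t) → γ' = γ) ∧
        0 < f (p.1 ^ 2 + p.2 ^ 2) ∧
        (∀ t : ℝ, γ (t + f (p.1 ^ 2 + p.2 ^ 2)) = γ t) ∧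
        (∀ T : ℝ, 0 < T → (∀ t : ℝ, γ (t + T) = γ t) → f (p.1 ^ 2 + p.2 ^ 2) ≤ T) := by
  have hcont : ContinuousAt f 0 := hf.continuousOn.continuousAt hU
  have hev : ∀ᶠ r in nhds (0:ℝ), 0 < f r := hcont.eventually (eventually_gt_nhds hf0)
  obtain ⟨δ, hδ, hδf⟩ := Metric.eventually_nhds_iff.mp hev
  refine ⟨Real.sqrt δ / 2, by positivity, ?_⟩
  intro p hp hp0
  have hr2δ : p.1^2 + p.2^2 < δ := by
    have h1 : ‖p.1‖ ≤ ‖p‖ := norm_fst_le p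
    have h2 : ‖p.2‖ ≤ ‖p‖ := norm_snd_le p
    have hpn : ‖p‖ < Real.sqrt δ / 2 := by simpa using hp
    have hδ' : (Real.sqrt δ)^2 = δ := Real.sq_sqrt hδ.le
    simp only [Real.norm_eq_abs] at h1 h2
    nlinarith [sq_abs p.1, sq_abs p.2, norm_nonneg p, Real.sqrt_nonneg δ,
      abs_nonneg p.1, abs_nonneg p.2]
  have hc : 0 < f (p.1^2 + p.2^2) := by
    apply hδf
    have hd : dist (p.1^2+p.2^2) (0:ℝ) = p.1^2+p.2^2 := by
      rw [Real.dist_eq, sub_zero, abs_of_nonneg (by positivity)]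
    rw [hd]
    exact hr2δ
  set c := f (p.1^2 + p.2^2) with hcdef
  set ω := 2*π/c with hωdef
  have hω : 0 < ω := div_pos (by positivity) hc
  have hωc : ω * c = 2*π := div_mul_cancel₀ _ hc.ne'
  set γ : ℝ → ℝ × ℝ :=
    fun t => (p.1 * cos (ω*t) - p.2 * sin (ω*t), p.1 * sin (ω*t) + p.2 * cos (ω*t)) with hγ
  have hnorm : ∀ t, (γ t).1^2 + (γ t).2^2 = p.1^2 + p.2^2 := by
    intro t
    simp only [hγ]
    nlinarith [sin_sq_add_cos_sq (ω*t)]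
  have hγ0 : γ 0 = p := by simp [hγ]
  have hγd : ∀ t, HasDerivAt γ (X (γ t)) t := by
    intro t
    rw [hX (γ t), hnorm t, ← hcdef]
    exact rot_deriv p.1 p.2 ω t
  refine ⟨γ, hγ0, hγd, ?_, hc, ?_, ?_⟩
  · -- uniqueness
    intro γ' hγ'0 hγ'd
    have hx' : ∀ t, HasDerivAt (fun s => (γ' s).1)
        (-((2*π / f ((γ' t).1^2 + (γ' t).2^2)) * (γ' t).2)) t := by
      intro t
      have := hd_fst' (hγ'd t)
      simpa [hX (γ' t), smul_eq_mul] using this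
    have hy' : ∀ t, HasDerivAt (fun s => (γ' s).2)
        ((2*π / f ((γ' t).1^2 + (γ' t).2^2)) * (γ' t).1) t := by
      intro t
      have := hd_snd' (hγ'd t)
      simpa [hX (γ' t), smul_eq_mul] using this
    have hR : ∀ t, HasDerivAt (fun s => (γ' s).1^2 + (γ' s).2^2) 0 t := by
      intro t
      have h := ((hx' t).pow 2).add ((hy' t).pow 2)
      exact h.congr_deriv (by ring)
    have hRconst : ∀ t, (γ' t).1^2 + (γ' t).2^2 = p.1^2 + p.2^2 := by
      intro t
      have hdiff : Differentiable ℝ (fun s => (γ' s).1^2+(γ' s).2^2) :=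
        fun s => (hR s).differentiableAt
      have h := is_const_of_deriv_eq_zero hdiff (fun s => (hR s).deriv) t 0
      simpa [hγ'0] using h
    have hx2 : ∀ t, HasDerivAt (fun s => (γ' s).1) (-(ω * (γ' t).2)) t := by
      intro t
      have := hx' t
      rw [hRconst t] at this
      exact this
    have hy2 : ∀ t, HasDerivAt (fun s => (γ' s).2) (ω * (γ' t).1) t := by
      intro t
      have := hy' t
      rw [hRconst t] at this
      exact this
    have hωt : ∀ t : ℝ, HasDerivAt (fun s => ω*s) ω t := by
      intro t; simpa using (hasDerivAt_id t).const_mul ω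
    have hcosd : ∀ t : ℝ, HasDerivAt (fun s => cos (ω*s)) (-sin (ω*t) * ω) t :=
      fun t => (Real.hasDerivAt_cos (ω*t)).comp t (hωt t)
    have hsind : ∀ t : ℝ, HasDerivAt (fun s => sin (ω*s)) (cos (ω*t) * ω) t :=
      fun t => (Real.hasDerivAt_sin (ω*t)).comp t (hωt t)
    have hu : ∀ t, HasDerivAt (fun s => cos (ω*s) * (γ' s).1 + sin (ω*s) * (γ' s).2) 0 t := by
      intro t
      have h := ((hcosd t).mul (hx2 t)).add ((hsind t).mul (hy2 t))
      exact h.congr_deriv (by ring)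
    have hv : ∀ t, HasDerivAt (fun s => -sin (ω*s) * (γ' s).1 + cos (ω*s) * (γ' s).2) 0 t := by
      intro t
      have h := (((hsind t).neg).mul (hx2 t)).add ((hcosd t).mul (hy2 t))
      exact h.congr_deriv (by simp only [Pi.neg_apply]; ring)
    have huc : ∀ t, cos (ω*t) * (γ' t).1 + sin (ω*t) * (γ' t).2 = p.1 := by
      intro t
      have hdiff : Differentiable ℝ (fun s => cos (ω*s) * (γ' s).1 + sin (ω*s) * (γ' s).2) :=
        fun s => (hu s).differentiableAt
      have h := is_const_of_deriv_eq_zero hdiff (fun s => (hu s).deriv) t 0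
      simpa [hγ'0] using h
    have hvc : ∀ t, -sin (ω*t) * (γ' t).1 + cos (ω*t) * (γ' t).2 = p.2 := by
      intro t
      have hdiff : Differentiable ℝ (fun s => -sin (ω*s) * (γ' s).1 + cos (ω*s) * (γ' s).2) :=
        fun s => (hv s).differentiableAt
      have h := is_const_of_deriv_eq_zero hdiff (fun s => (hv s).deriv) t 0
      simpa [hγ'0] using h
    funext t
    have pyth := sin_sq_add_cos_sq (ω*t)
    have e1 := huc t
    have e2 := hvc t
    have hfst : (γ' t).1 = (γ t).1 := by
      simp only [hγ]
      linear_combination cos (ω*t) * e1 - sin (ω*t) * e2 - (γ' t).1 * pyth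
    have hsnd : (γ' t).2 = (γ t).2 := by
      simp only [hγ]
      linear_combination sin (ω*t) * e1 + cos (ω*t) * e2 - (γ' t).2 * pyth
    exact Prod.ext hfst hsnd
  · -- periodicity
    intro t
    have harg : ω*(t+c) = ω*t + 2*π := by rw [mul_add, hωc]
    simp only [hγ, harg, Real.cos_add_two_pi, Real.sin_add_two_pi]
  · -- minimality
    intro T hT hper
    have hγT : γ T = p := by
      have h := hper 0
      rw [zero_add, hγ0] at h
      exact h
    have e1 : p.1 * cos (ω*T) - p.2 * sin (ω*T) = p.1 := congrArg Prod.fst hγT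
    have e2 : p.1 * sin (ω*T) + p.2 * cos (ω*T) = p.2 := congrArg Prod.snd hγT
    have hr2pos : 0 < p.1^2 + p.2^2 := by
      have h : p.1 ≠ 0 ∨ p.2 ≠ 0 := by
        by_contra h
        push_neg at h
        exact hp0 (Prod.ext h.1 h.2)
      rcases h with h | h <;> positivity
    have h3 : (p.1^2 + p.2^2) * cos (ω*T) = (p.1^2 + p.2^2) * 1 := by
      linear_combination p.1 * e1 + p.2 * e2
    have hcos1 : cos (ω*T) = 1 := mul_left_cancel₀ hr2pos.ne' h3
    obtain ⟨n, hn⟩ := (Real.cos_eq_one_iff _).mp hcos1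
    have hωT : 0 < ω * T := mul_pos hω hT
    have hnpos : (0:ℝ) < n := by nlinarith [Real.pi_pos]
    have hn1 : (1:ℝ) ≤ n := by
      have : (0:ℤ) < n := by exact_mod_cast hnpos
      exact_mod_cast this
    have : ω * c ≤ ω * T := by
      rw [hωc, ← hn]
      nlinarith [Real.pi_pos]
    exact le_of_mul_le_mul_left this hω
end

section
/- Let γ₁, γ₂ be smooth real functions defined on neighborhoods of 0 in ℝ with γ₁(0) ≠ 0 and γ₂(0) ≠ 0, and consider the smooth vector fields X₁(x,y) = (γ₁(y)·x, 0) and X₂(x,y) = (γ₂(y)·x, 0) on neighborhoods of the origin in ℝ². Then X₁ and X₂ are locally smoothly isomorphic at the origin if and only if γ₁ and γ₂ are left equivalent at 0, i.e. there is a smooth function ψ defined on a neighborhood of 0 in ℝ with ψ(0) = 0 and ψ'(0) ≠ 0 such that γ₁(y) = γ₂(ψ(y)) for all y near 0. -/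
open Real

/-- Two smooth vector fields on neighborhoods of the origin in `ℝ²` are *locally smoothly
isomorphic at the origin* if there is a smooth diffeomorphism `Φ` between open neighborhoods
of the origin, fixing the origin, whose total derivative sends `X₁` to `X₂`. -/
def LocallySmoothlyIsomorphicAtOrigin (X₁ X₂ : ℝ × ℝ → ℝ × ℝ) : Prop :=
  ∃ (U V : Set (ℝ × ℝ)) (Φ Ψ : ℝ × ℝ → ℝ × ℝ),
    IsOpen U ∧ IsOpen V ∧ (0 : ℝ × ℝ) ∈ U ∧ (0 : ℝ × ℝ) ∈ V ∧
    ContDiffOn ℝ (⊤ : ℕ∞) Φ U ∧ ContDiffOn ℝ (⊤ : ℕ∞) Ψ V ∧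
    Set.MapsTo Φ U V ∧ Set.MapsTo Ψ V U ∧
    Set.LeftInvOn Ψ Φ U ∧ Set.LeftInvOn Φ Ψ V ∧
    Φ 0 = 0 ∧
    ∀ p ∈ U, fderiv ℝ Φ p (X₁ p) = X₂ (Φ p)

section AuxiliaryLemmas

open Real Set Filter Metric Topology

private lemma sliceX {Φ : ℝ × ℝ → ℝ × ℝ} {x y : ℝ} (h : DifferentiableAt ℝ Φ (x, y)) :
    HasDerivAt (fun t => Φ (t, y)) (fderiv ℝ Φ (x, y) (1, 0)) x := by
  have hι : HasDerivAt (fun t : ℝ => (t, y)) ((1 : ℝ), (0 : ℝ)) x :=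
    (hasDerivAt_id x).prodMk (hasDerivAt_const x y)
  exact h.hasFDerivAt.comp_hasDerivAt x hι

private lemma sliceY {Φ : ℝ × ℝ → ℝ × ℝ} {x y : ℝ} (h : DifferentiableAt ℝ Φ (x, y)) :
    HasDerivAt (fun t => Φ (x, t)) (fderiv ℝ Φ (x, y) (0, 1)) y := by
  have hι : HasDerivAt (fun t : ℝ => (x, t)) ((0 : ℝ), (1 : ℝ)) y :=
    (hasDerivAt_const y x).prodMk (hasDerivAt_id y)
  exact h.hasFDerivAt.comp_hasDerivAt y hι

private lemma key_inj {U V : Set (ℝ × ℝ)} {Φ Ψ : ℝ × ℝ → ℝ × ℝ}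
    (hUo : IsOpen U) (hVo : IsOpen V)
    (hΦs : ContDiffOn ℝ (⊤ : ℕ∞) Φ U) (hΨs : ContDiffOn ℝ (⊤ : ℕ∞) Ψ V)
    (hm : Set.MapsTo Φ U V) (hli : Set.LeftInvOn Ψ Φ U) {p : ℝ × ℝ} (hp : p ∈ U) :
    Function.Injective (fderiv ℝ Φ p) := by
  have hΦd : DifferentiableAt ℝ Φ p :=
    (hΦs.differentiableOn (by simp)).differentiableAt (hUo.mem_nhds hp)
  have hΨd : DifferentiableAt ℝ Ψ (Φ p) :=
    (hΨs.differentiableOn (by simp)).differentiableAt (hVo.mem_nhds (hm hp))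
  have hEq : (Ψ ∘ Φ) =ᶠ[nhds p] id := by
    filter_upwards [hUo.mem_nhds hp] with q hq
    exact hli hq
  have h1 : fderiv ℝ (Ψ ∘ Φ) p = fderiv ℝ (id : ℝ × ℝ → ℝ × ℝ) p := hEq.fderiv_eq
  rw [fderiv_comp p hΨd hΦd, fderiv_id] at h1
  have hv : ∀ u, fderiv ℝ Ψ (Φ p) (fderiv ℝ Φ p u) = u := by
    intro u
    have := DFunLike.congr_fun h1 u
    simpa using this
  intro v w h
  rw [← hv v, ← hv w, h]

private lemma forward_dir
    (γ₁ γ₂ : ℝ → ℝ) (U₁ U₂ : Set ℝ)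
    (hU₂ : U₂ ∈ nhds (0 : ℝ))
    (hγ₂ : ContDiffOn ℝ (⊤ : ℕ∞) γ₂ U₂)
    (hγ₂0 : γ₂ 0 ≠ 0)
    (X₁ X₂ : ℝ × ℝ → ℝ × ℝ)
    (hX₁ : ∀ p : ℝ × ℝ, X₁ p = (γ₁ p.2 * p.1, 0))
    (hX₂ : ∀ p : ℝ × ℝ, X₂ p = (γ₂ p.2 * p.1, 0))
    (h : LocallySmoothlyIsomorphicAtOrigin X₁ X₂) :
      ∃ (ψ : ℝ → ℝ) (W : Set ℝ), W ∈ nhds (0 : ℝ) ∧ ContDiffOn ℝ (⊤ : ℕ∞) ψ W ∧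
        ψ 0 = 0 ∧ deriv ψ 0 ≠ 0 ∧
        ∃ W' ∈ nhds (0 : ℝ), ∀ y ∈ W', γ₁ y = γ₂ (ψ y) := by
  obtain ⟨U, V, Φ, Ψ, hUo, hVo, hU0, hV0, hΦs, hΨs, hmΦ, hmΨ, hli, hri, hΦ0, hiso⟩ := h
  obtain ⟨O₂, hO₂sub, hO₂o, hO₂0⟩ := _root_.mem_nhds_iff.mp hU₂
  set O : Set ℝ := O₂ ∩ γ₂ ⁻¹' {0}ᶜ with hOdef
  have hOo : IsOpen O :=
    (hγ₂.continuousOn.mono hO₂sub).isOpen_inter_preimage hO₂o isOpen_compl_singleton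
  have hO0 : (0 : ℝ) ∈ O := ⟨hO₂0, by simpa using hγ₂0⟩
  have hGood : IsOpen (U ∩ Φ ⁻¹' ((univ : Set ℝ) ×ˢ O)) :=
    hΦs.continuousOn.isOpen_inter_preimage hUo (isOpen_univ.prod hOo)
  have h0Good : (0 : ℝ × ℝ) ∈ U ∩ Φ ⁻¹' ((univ : Set ℝ) ×ˢ O) := by
    refine ⟨hU0, ?_⟩
    rw [mem_preimage, hΦ0]
    exact ⟨trivial, hO0⟩
  obtain ⟨ε, hε, hball⟩ := Metric.isOpen_iff.mp hGood 0 h0Good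
  set W : Set ℝ := Metric.ball (0 : ℝ) ε with hWdef
  have h0W : (0 : ℝ) ∈ W := mem_ball_self hε
  have hWnhds : W ∈ nhds (0 : ℝ) := Metric.ball_mem_nhds 0 hε
  have hWsq : ∀ {x y : ℝ}, x ∈ W → y ∈ W →
      (x, y) ∈ U ∩ Φ ⁻¹' ((univ : Set ℝ) ×ˢ O) := by
    intro x y hx hy
    apply hball
    have : ((x, y) : ℝ × ℝ) ∈ Metric.ball (0 : ℝ) ε ×ˢ Metric.ball (0 : ℝ) ε := ⟨hx, hy⟩
    rwa [ball_prod_same] at this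
  have hdiff : ∀ {x y : ℝ}, x ∈ W → y ∈ W → DifferentiableAt ℝ Φ (x, y) := by
    intro x y hx hy
    exact (hΦs.differentiableOn (by simp)).differentiableAt (hUo.mem_nhds (hWsq hx hy).1)
  -- Lemma A : the y-axis is preserved
  have hA : ∀ y ∈ W, (Φ (0, y)).1 = 0 := by
    intro y hy
    have hmem := hWsq h0W hy
    have h := hiso ((0 : ℝ), y) hmem.1
    rw [hX₁ ((0 : ℝ), y), hX₂ (Φ ((0 : ℝ), y))] at h
    have hz : ((γ₁ (((0 : ℝ), y) : ℝ × ℝ).2 * (((0 : ℝ), y) : ℝ × ℝ).1 : ℝ), (0 : ℝ))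
        = (0 : ℝ × ℝ) := by simp
    rw [hz, map_zero] at h
    have h1 := congrArg Prod.fst h
    simp only [Prod.fst_zero] at h1
    have hne : γ₂ ((Φ ((0 : ℝ), y)).2) ≠ 0 := by
      have hm2 : Φ ((0 : ℝ), y) ∈ (univ : Set ℝ) ×ˢ O := hmem.2
      simpa using hm2.2.2
    rcases mul_eq_zero.mp h1.symm with h' | h'
    · exact absurd h' hne
    · exact h'
  set ψ : ℝ → ℝ := fun y => (Φ (0, y)).2 with hψdef
  have hψ0 : ψ 0 = 0 := by
    show (Φ ((0 : ℝ), (0 : ℝ))).2 = 0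
    rw [show (((0 : ℝ), (0 : ℝ)) : ℝ × ℝ) = (0 : ℝ × ℝ) from rfl, hΦ0]
    rfl
  -- smoothness of ψ
  have hψs : ContDiffOn ℝ (⊤ : ℕ∞) ψ W := by
    have h1 : ContDiffOn ℝ (⊤ : ℕ∞) (fun y : ℝ => ((0 : ℝ), y)) W :=
      (contDiff_const.prodMk contDiff_id).contDiffOn
    have h2 : ContDiffOn ℝ (⊤ : ℕ∞) (Φ ∘ fun y : ℝ => ((0 : ℝ), y)) W :=
      hΦs.comp h1 (fun y hy => (hWsq h0W hy).1)
    exact contDiff_snd.comp_contDiffOn h2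
  -- the x-component of the derivative in the y direction vanishes on the axis
  have hy1 : ∀ y ∈ W, (fderiv ℝ Φ (0, y) (0, 1)).1 = 0 := by
    intro y hy
    have hYd : HasDerivAt (fun t => (Φ (0, t)).1) ((fderiv ℝ Φ (0, y) (0, 1)).1) y :=
      (ContinuousLinearMap.fst ℝ ℝ ℝ).hasFDerivAt.comp_hasDerivAt y (sliceY (hdiff h0W hy))
    have hzero : HasDerivAt (fun t => (Φ (0, t)).1) 0 y := by
      have heq : (fun t => (Φ (0, t)).1) =ᶠ[nhds y] (fun _ => (0 : ℝ)) := by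
        filter_upwards [isOpen_ball.mem_nhds hy] with t ht
        exact hA t ht
      exact (hasDerivAt_const y (0 : ℝ)).congr_of_eventuallyEq heq
    exact hYd.unique hzero
  -- injectivity of the derivative
  have hinj : ∀ y ∈ W, Function.Injective (fderiv ℝ Φ (0, y)) := fun y hy =>
    key_inj hUo hVo hΦs hΨs hmΦ hli (hWsq h0W hy).1
  -- nonvanishing of ∂Φ₁/∂x on the axis
  have hax : ∀ y ∈ W, (fderiv ℝ Φ (0, y) (1, 0)).1 ≠ 0 := by
    intro y hy h0
    set L := fderiv ℝ Φ (0, y) with hLdef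
    set s := (L (1, 0)).2 with hsdef
    set t := (L (0, 1)).2 with htdef
    have hL10 : L (1, 0) = (0, s) := Prod.ext h0 rfl
    have hL01 : L (0, 1) = (0, t) := Prod.ext (hy1 y hy) rfl
    have hcomb : L (t, -s) = 0 := by
      have hv : ((t, -s) : ℝ × ℝ) = t • ((1 : ℝ), (0 : ℝ)) - s • ((0 : ℝ), (1 : ℝ)) := by
        simp [Prod.ext_iff]
      rw [hv, map_sub, map_smul, map_smul, hL10, hL01]
      simp [Prod.ext_iff, mul_comm]
    have h1 : ((t, -s) : ℝ × ℝ) = 0 := by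
      apply hinj y hy
      rw [hcomb, map_zero]
    have hs0 : s = 0 := by
      have := congrArg Prod.snd h1
      simpa using this
    have hcontra : L (1, 0) = L 0 := by
      rw [map_zero, hL10, hs0]
      rfl
    have := hinj y hy hcontra
    simp [Prod.ext_iff] at this
  -- the eigenvalue relation
  have key : ∀ y ∈ W, γ₁ y = γ₂ (ψ y) := by
    intro y hy
    set F : ℝ → ℝ := fun x => (Φ (x, y)).1 with hFdef
    set G : ℝ → ℝ := fun x => (Φ (x, y)).2 with hGdef
    have hFd : ∀ x ∈ W, HasDerivAt F ((fderiv ℝ Φ (x, y) (1, 0)).1) x := fun x hx =>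
      (ContinuousLinearMap.fst ℝ ℝ ℝ).hasFDerivAt.comp_hasDerivAt x (sliceX (hdiff hx hy))
    have hGd : ∀ x ∈ W, HasDerivAt G ((fderiv ℝ Φ (x, y) (1, 0)).2) x := fun x hx =>
      (ContinuousLinearMap.snd ℝ ℝ ℝ).hasFDerivAt.comp_hasDerivAt x (sliceX (hdiff hx hy))
    have hid : ∀ x ∈ W, γ₁ y * x * deriv F x = γ₂ (G x) * F x := by
      intro x hx
      have h := hiso (x, y) (hWsq hx hy).1
      rw [hX₁ (x, y), hX₂ (Φ (x, y))] at h
      have hv : ((γ₁ ((x, y) : ℝ × ℝ).2 * ((x, y) : ℝ × ℝ).1 : ℝ), (0 : ℝ))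
          = (γ₁ y * x) • ((1 : ℝ), (0 : ℝ)) := by simp
      rw [hv, map_smul] at h
      have h1 := congrArg Prod.fst h
      simp only [Prod.smul_fst, smul_eq_mul] at h1
      rw [(hFd x hx).deriv]
      exact h1
    -- smoothness of F on W, for second derivatives
    have hFs : ContDiffOn ℝ (⊤ : ℕ∞) F W := by
      have h1 : ContDiffOn ℝ (⊤ : ℕ∞) (fun x : ℝ => (x, y)) W :=
        (contDiff_id.prodMk contDiff_const).contDiffOn
      have h2 : ContDiffOn ℝ (⊤ : ℕ∞) (Φ ∘ fun x : ℝ => (x, y)) W :=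
        hΦs.comp h1 (fun x hx => (hWsq hx hy).1)
      exact contDiff_fst.comp_contDiffOn h2
    have hF' : ContDiffOn ℝ 1 (deriv F) W := hFs.deriv_of_isOpen isOpen_ball (WithTop.coe_le_coe.mpr le_top)
    have hdF0 : DifferentiableAt ℝ (deriv F) 0 :=
      (hF'.differentiableOn one_ne_zero).differentiableAt (isOpen_ball.mem_nhds h0W)
    have hL : HasDerivAt (fun x => γ₁ y * x * deriv F x) (γ₁ y * deriv F 0) 0 := by
      have h1 : HasDerivAt (fun x : ℝ => γ₁ y * x) (γ₁ y) 0 := by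
        simpa using (hasDerivAt_id (0 : ℝ)).const_mul (γ₁ y)
      have h2 := h1.mul hdF0.hasDerivAt
      simpa [Pi.mul_def] using h2
    have hψyO : ψ y ∈ O := (hWsq h0W hy).2.2
    have hγ₂dAt : DifferentiableAt ℝ γ₂ (ψ y) :=
      (hγ₂.differentiableOn (by simp)).differentiableAt
        (_root_.mem_nhds_iff.mpr ⟨O₂, hO₂sub, hO₂o, hψyO.1⟩)
    have hF00 : F 0 = 0 := hA y hy
    have hR : HasDerivAt (fun x => γ₂ (G x) * F x) (γ₂ (ψ y) * deriv F 0) 0 := by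
      have hGd0 := hGd 0 h0W
      have hcomp : HasDerivAt (fun x => γ₂ (G x))
          (deriv γ₂ (ψ y) * (fderiv ℝ Φ (0, y) (1, 0)).2) 0 :=
        (hγ₂dAt.hasDerivAt).comp 0 hGd0
      have hF0d : HasDerivAt F (deriv F 0) 0 := (hFd 0 h0W).differentiableAt.hasDerivAt
      have := hcomp.mul hF0d
      simpa [hF00, Pi.mul_def] using this
    have hEqF : (fun x => γ₂ (G x) * F x) =ᶠ[nhds (0 : ℝ)]
        (fun x => γ₁ y * x * deriv F x) := by
      filter_upwards [isOpen_ball.mem_nhds h0W] with x hx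
      exact (hid x hx).symm
    have hfinal : γ₁ y * deriv F 0 = γ₂ (ψ y) * deriv F 0 :=
      (hL.congr_of_eventuallyEq hEqF).unique hR
    have hane : deriv F 0 ≠ 0 := by
      rw [(hFd 0 h0W).deriv]
      exact hax y hy
    exact mul_right_cancel₀ hane hfinal
  -- nonvanishing of deriv ψ at 0
  have hψd0 : deriv ψ 0 ≠ 0 := by
    have hψdAt : HasDerivAt ψ ((fderiv ℝ Φ (0, 0) (0, 1)).2) 0 :=
      (ContinuousLinearMap.snd ℝ ℝ ℝ).hasFDerivAt.comp_hasDerivAt 0 (sliceY (hdiff h0W h0W))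
    intro h0
    rw [hψdAt.deriv] at h0
    have hvec : fderiv ℝ Φ ((0 : ℝ), (0 : ℝ)) ((0 : ℝ), (1 : ℝ)) = 0 :=
      Prod.ext (hy1 0 h0W) h0
    have h1 : (((0 : ℝ), (1 : ℝ)) : ℝ × ℝ) = 0 := by
      apply hinj 0 h0W
      rw [hvec, map_zero]
    simp [Prod.ext_iff] at h1
  exact ⟨ψ, W, hWnhds, hψs, hψ0, hψd0, W, hWnhds, key⟩

private lemma backward_dir
    (γ₁ γ₂ : ℝ → ℝ)
    (X₁ X₂ : ℝ × ℝ → ℝ × ℝ)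
    (hX₁ : ∀ p : ℝ × ℝ, X₁ p = (γ₁ p.2 * p.1, 0))
    (hX₂ : ∀ p : ℝ × ℝ, X₂ p = (γ₂ p.2 * p.1, 0))
    (h : ∃ (ψ : ℝ → ℝ) (W : Set ℝ), W ∈ nhds (0 : ℝ) ∧ ContDiffOn ℝ (⊤ : ℕ∞) ψ W ∧
        ψ 0 = 0 ∧ deriv ψ 0 ≠ 0 ∧
        ∃ W' ∈ nhds (0 : ℝ), ∀ y ∈ W', γ₁ y = γ₂ (ψ y)) :
    LocallySmoothlyIsomorphicAtOrigin X₁ X₂ := by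
  obtain ⟨ψ, W, hW, hψs, hψ0, hψd0, W', hW', hψγ⟩ := h
  obtain ⟨Wo, hWoSub, hWoO, hWo0⟩ := _root_.mem_nhds_iff.mp hW
  obtain ⟨Wo', hWoSub', hWoO', hWo0'⟩ := _root_.mem_nhds_iff.mp hW'
  have hψs' : ContDiffOn ℝ (⊤ : ℕ∞) ψ Wo := hψs.mono hWoSub
  have hdc : ContinuousOn (deriv ψ) Wo :=
    (hψs'.deriv_of_isOpen (m := 1) hWoO (WithTop.coe_le_coe.mpr le_top)).continuousOn
  set S : Set ℝ := (Wo ∩ Wo') ∩ deriv ψ ⁻¹' {0}ᶜ with hSdef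
  have hSo : IsOpen S :=
    (hdc.mono inter_subset_left).isOpen_inter_preimage (hWoO.inter hWoO') isOpen_compl_singleton
  have hS0 : (0 : ℝ) ∈ S := ⟨⟨hWo0, hWo0'⟩, by simpa using hψd0⟩
  have hψat : ContDiffAt ℝ (⊤ : ℕ∞) ψ 0 := hψs.contDiffAt hW
  have hstrict : HasStrictDerivAt ψ (deriv ψ 0) 0 := hψat.hasStrictDerivAt (by simp)
  set e : OpenPartialHomeomorph ℝ ℝ :=
    (hstrict.hasStrictFDerivAt_equiv hψd0).toOpenPartialHomeomorph ψ with hedef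
  have hecoe : ⇑e = ψ := rfl
  have h0src : (0 : ℝ) ∈ e.source :=
    (hstrict.hasStrictFDerivAt_equiv hψd0).mem_toOpenPartialHomeomorph_source
  have h0tgt : (0 : ℝ) ∈ e.target := by
    have := (hstrict.hasStrictFDerivAt_equiv hψd0).image_mem_toOpenPartialHomeomorph_target
    rwa [hψ0] at this
  have hsymm0 : e.symm 0 = 0 := by
    have := e.left_inv h0src
    rwa [hecoe, hψ0] at this
  set A : Set ℝ := e.source ∩ S with hAdef
  have hAo : IsOpen A := e.open_source.inter hSo
  have hA0 : (0 : ℝ) ∈ A := ⟨h0src, hS0⟩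
  set B : Set ℝ := e.target ∩ e.symm ⁻¹' A with hBdef
  have hBo : IsOpen B :=
    e.continuousOn_symm.isOpen_inter_preimage e.open_target hAo
  have hB0 : (0 : ℝ) ∈ B := ⟨h0tgt, by rw [mem_preimage, hsymm0]; exact hA0⟩
  have hψdAt : ∀ z ∈ Wo, HasDerivAt ψ (deriv ψ z) z := fun z hz =>
    ((hψs'.differentiableOn (by simp)).differentiableAt (hWoO.mem_nhds hz)).hasDerivAt
  have hsymmS : ContDiffOn ℝ (⊤ : ℕ∞) e.symm B := by
    intro b hb
    have hbA : e.symm b ∈ A := hb.2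
    have hz : e.symm b ∈ Wo := hbA.2.1.1
    have hd0 : deriv ψ (e.symm b) ≠ 0 := by simpa using hbA.2.2
    have hca : ContDiffAt ℝ (⊤ : ℕ∞) e.symm b := by
      refine e.contDiffAt_symm_deriv hd0 hb.1 ?_ ?_
      · rw [hecoe]; exact hψdAt _ hz
      · rw [hecoe]; exact hψs'.contDiffAt (hWoO.mem_nhds hz)
    exact hca.contDiffWithinAt
  refine ⟨(univ : Set ℝ) ×ˢ A, (univ : Set ℝ) ×ˢ B,
    (fun p => (p.1, ψ p.2)), (fun p => (p.1, e.symm p.2)),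
    isOpen_univ.prod hAo, isOpen_univ.prod hBo,
    ⟨trivial, hA0⟩, ⟨trivial, hB0⟩, ?_, ?_, ?_, ?_, ?_, ?_, ?_, ?_⟩
  · exact (contDiff_fst.contDiffOn).prodMk
      (hψs'.comp contDiff_snd.contDiffOn (fun p hp => hp.2.2.1.1))
  · exact (contDiff_fst.contDiffOn).prodMk
      (hsymmS.comp contDiff_snd.contDiffOn (fun p hp => hp.2))
  · rintro ⟨x, y⟩ hp
    have hy : y ∈ A := hp.2
    refine ⟨trivial, ?_, ?_⟩
    · show ψ y ∈ e.target
      rw [← hecoe]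
      exact e.map_source hy.1
    · show e.symm (ψ y) ∈ A
      rw [← hecoe, e.left_inv hy.1]
      exact hy
  · rintro ⟨x, y⟩ hp
    exact ⟨trivial, hp.2.2⟩
  · rintro ⟨x, y⟩ hp
    have hy : y ∈ A := hp.2
    show ((x, e.symm (ψ y)) : ℝ × ℝ) = (x, y)
    rw [← hecoe, e.left_inv hy.1]
  · rintro ⟨x, y⟩ hp
    have hy : y ∈ B := hp.2
    show ((x, ψ (e.symm y)) : ℝ × ℝ) = (x, y)
    rw [← hecoe, e.right_inv hy.1]
  · show (((0 : ℝ × ℝ).1, ψ (0 : ℝ × ℝ).2) : ℝ × ℝ) = 0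
    simp [hψ0]
  · rintro ⟨x, y⟩ hp
    have hyA : y ∈ A := hp.2
    have hyWo : y ∈ Wo := hyA.2.1.1
    have hyWo' : y ∈ Wo' := hyA.2.1.2
    have hψy : HasDerivAt ψ (deriv ψ y) y := hψdAt y hyWo
    have hfst : HasFDerivAt (fun p : ℝ × ℝ => p.1)
        (ContinuousLinearMap.fst ℝ ℝ ℝ) (x, y) := hasFDerivAt_fst
    have hsnd : HasFDerivAt (fun p : ℝ × ℝ => ψ p.2)
        (((1 : ℝ →L[ℝ] ℝ).smulRight (deriv ψ y)).comp (ContinuousLinearMap.snd ℝ ℝ ℝ))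
        (x, y) :=
      (hψy.hasFDerivAt).comp (x, y) hasFDerivAt_snd
    have hΦd : HasFDerivAt (fun p : ℝ × ℝ => (p.1, ψ p.2))
        ((ContinuousLinearMap.fst ℝ ℝ ℝ).prod
          (((1 : ℝ →L[ℝ] ℝ).smulRight (deriv ψ y)).comp (ContinuousLinearMap.snd ℝ ℝ ℝ)))
        (x, y) := hfst.prodMk hsnd
    rw [hΦd.fderiv, hX₁ (x, y), hX₂ ((x, ψ y) : ℝ × ℝ)]
    have hγ : γ₁ y = γ₂ (ψ y) := hψγ y (hWoSub' hyWo')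
    simp [ContinuousLinearMap.prod_apply, hγ]

end AuxiliaryLemmas

/-- Local classification of hyperbolic singularities with eigenvalue 0
(Type II): the normal forms `X₁ = γ₁(y)x·∂/∂x` and `X₂ = γ₂(y)x·∂/∂x` are locally smoothly
isomorphic at the origin iff the eigenvalue functions `γ₁, γ₂` are left equivalent at 0. -/
theorem typeII_singularity_local_classification
    (γ₁ γ₂ : ℝ → ℝ) (U₁ U₂ : Set ℝ)
    (hU₁ : U₁ ∈ nhds (0 : ℝ)) (hU₂ : U₂ ∈ nhds (0 : ℝ))
    (hγ₁ : ContDiffOn ℝ (⊤ : ℕ∞) γ₁ U₁) (hγ₂ : ContDiffOn ℝ (⊤ : ℕ∞) γ₂ U₂)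
    (hγ₁0 : γ₁ 0 ≠ 0) (hγ₂0 : γ₂ 0 ≠ 0)
    (X₁ X₂ : ℝ × ℝ → ℝ × ℝ)
    (hX₁ : ∀ p : ℝ × ℝ, X₁ p = (γ₁ p.2 * p.1, 0))
    (hX₂ : ∀ p : ℝ × ℝ, X₂ p = (γ₂ p.2 * p.1, 0)) :
    LocallySmoothlyIsomorphicAtOrigin X₁ X₂ ↔
      ∃ (ψ : ℝ → ℝ) (W : Set ℝ), W ∈ nhds (0 : ℝ) ∧ ContDiffOn ℝ (⊤ : ℕ∞) ψ W ∧
        ψ 0 = 0 ∧ deriv ψ 0 ≠ 0 ∧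
        ∃ W' ∈ nhds (0 : ℝ), ∀ y ∈ W', γ₁ y = γ₂ (ψ y) := by
  constructor
  · exact forward_dir γ₁ γ₂ U₁ U₂ hU₂ hγ₂ hγ₂0 X₁ X₂ hX₁ hX₂
  · exact backward_dir γ₁ γ₂ X₁ X₂ hX₁ hX₂
end

section
/- Let f be a smooth real function on ℝ² (or on an open rectangle I × J around the origin closed under the map (x,y) ↦ (x, x²) in the relevant range) such that f(x, x²) = 0 for all x with (x, x²) in the domain. Then there exists a smooth real function g on the same domain such that f(x,y) = g(x,y)·(y − x²) for all (x,y) in the domain. -/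
open Real Set Filter
open scoped ENNReal NNReal Topology

noncomputable def divAux : (m : ℕ) →
    ContinuousMultilinearMap ℝ (fun _ : Fin (m + 1) => ℝ × ℝ) ℝ →
    ContinuousMultilinearMap ℝ (fun _ : Fin m => ℝ × ℝ) ℝ
  | 0, P => P.curryLeft ((0 : ℝ), (1 : ℝ))
  | (j + 1), P => P.curryLeft ((0 : ℝ), (1 : ℝ)) +
      (((ContinuousLinearMap.fst ℝ ℝ ℝ).smulRight
        (divAux j (P.curryLeft ((1 : ℝ), (0 : ℝ))))).uncurryLeft)

lemma smooth_div_snd (F : ℝ × ℝ → ℝ) (hF : ContDiff ℝ (⊤ : ℕ∞) F)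
    (h0 : ∀ u : ℝ, F (u, 0) = 0) :
    ∃ G : ℝ × ℝ → ℝ, ContDiff ℝ (⊤ : ℕ∞) G ∧ ∀ q : ℝ × ℝ, F q = q.2 * G q := by
  set D : ℝ × ℝ → ℝ := fun q => fderiv ℝ F q ((0:ℝ), (1:ℝ)) with hD
  have hDs : ContDiff ℝ (⊤ : ℕ∞) D :=
    (hF.fderiv_right (m := ((⊤ : ℕ∞) : WithTop ℕ∞)) (by simp)).clm_apply contDiff_const
  let χ : ContDiffBump (0:ℝ) := ⟨1, 2, by norm_num, by norm_num⟩
  let g : ℝ × ℝ → ℝ → ℝ := fun p y => χ y * D (p.1, -y * p.2)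
  let f0 : ℝ → ℝ := Set.indicator (Set.Icc (0:ℝ) 1) (fun _ => (1:ℝ))
  have hf0 : MeasureTheory.LocallyIntegrable f0 MeasureTheory.volume :=
    ((continuous_const (y := (1:ℝ))).integrableOn_Icc.integrable_indicator
      measurableSet_Icc).locallyIntegrable
  have hg : ContDiffOn ℝ (⊤ : ℕ∞) (Function.uncurry g) (univ ×ˢ univ) := by
    apply ContDiff.contDiffOn
    show ContDiff ℝ _ (fun x : (ℝ × ℝ) × ℝ => χ x.2 * D (x.1.1, -x.2 * x.1.2))
    exact (χ.contDiff.comp contDiff_snd).mul (hDs.comp ((contDiff_fst.comp contDiff_fst).prodMk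
      ((contDiff_snd.neg).mul (contDiff_snd.comp contDiff_fst))))
  have hgs : ∀ p, ∀ x, p ∈ (univ : Set (ℝ × ℝ)) → x ∉ Metric.closedBall (0:ℝ) 2 → g p x = 0 := by
    intro p x _ hx
    rw [Metric.mem_closedBall, not_le] at hx
    have : χ x = 0 := χ.zero_of_le_dist hx.le
    simp [g, this]
  have hconv := MeasureTheory.contDiffOn_convolution_right_with_param (μ := MeasureTheory.volume)
    (ContinuousLinearMap.lsmul ℝ ℝ) isOpen_univ (isCompact_closedBall (0:ℝ) 2) hgs hf0 hg
  rw [univ_prod_univ, contDiffOn_univ] at hconv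
  refine ⟨fun p => (MeasureTheory.convolution f0 (g p) (ContinuousLinearMap.lsmul ℝ ℝ) MeasureTheory.volume) 0,
    hconv.comp (contDiff_id.prodMk contDiff_const), ?_⟩
  intro q
  have hval : (MeasureTheory.convolution f0 (g q) (ContinuousLinearMap.lsmul ℝ ℝ) MeasureTheory.volume) 0
      = ∫ t in (0:ℝ)..1, D (q.1, t * q.2) := by
    rw [MeasureTheory.convolution_def, intervalIntegral.integral_of_le zero_le_one,
      ← MeasureTheory.integral_Icc_eq_integral_Ioc]
    have : (fun t => (ContinuousLinearMap.lsmul ℝ ℝ) (f0 t) (g q (0 - t)))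
        = Set.indicator (Icc 0 1) (fun t => D (q.1, t * q.2)) := by
      funext t
      by_cases ht : t ∈ Icc (0:ℝ) 1
      · have hχ : χ (0 - t) = 1 := χ.one_of_mem_closedBall (by
          rw [Metric.mem_closedBall, Real.dist_eq, abs_le]
          constructor <;> linarith [ht.1, ht.2])
        rw [zero_sub] at hχ
        simp [f0, g, ht, hχ]
      · simp [f0, ht]
    rw [this, MeasureTheory.integral_indicator measurableSet_Icc]
  show F q = q.2 * (MeasureTheory.convolution f0 (g q) (ContinuousLinearMap.lsmul ℝ ℝ) MeasureTheory.volume) 0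
  rw [hval]
  have hderiv : ∀ t : ℝ, HasDerivAt (fun t => F (q.1, t * q.2)) (D (q.1, t * q.2) * q.2) t := by
    intro t
    have h1 : HasDerivAt (fun t : ℝ => ((q.1, t * q.2) : ℝ × ℝ)) ((0:ℝ), 1 * q.2) t :=
      (hasDerivAt_const t q.1).prodMk ((hasDerivAt_id t).mul_const q.2)
    have h2 := (hF.differentiable (by simp) (q.1, t * q.2)).hasFDerivAt.comp_hasDerivAt t h1
    refine HasDerivAt.congr_deriv h2 ?_
    have : ((0:ℝ), 1 * q.2) = q.2 • ((0:ℝ), (1:ℝ)) := by ext <;> simp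
    rw [this, map_smul, smul_eq_mul, mul_comm]
  have hcont : Continuous (fun t : ℝ => D (q.1, t * q.2) * q.2) :=
    (hDs.continuous.comp (continuous_const.prodMk (continuous_id.mul continuous_const))).mul
      continuous_const
  have hftc := intervalIntegral.integral_eq_sub_of_hasDerivAt (fun t _ => hderiv t)
    (hcont.intervalIntegrable 0 1)
  calc F q = F (q.1, 1 * q.2) - F (q.1, 0 * q.2) := by simp [h0]
    _ = ∫ t in (0:ℝ)..1, D (q.1, t * q.2) * q.2 := hftc.symm
    _ = q.2 * ∫ t in (0:ℝ)..1, D (q.1, t * q.2) := by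
      rw [intervalIntegral.integral_mul_const, mul_comm]

/-- (Hadamard-type division lemma.) A smooth function on `ℝ²` vanishing on
the parabola `{y = x²}` is smoothly divisible by `y − x²`. -/
theorem smooth_division_by_parabola
    (f : ℝ × ℝ → ℝ) (hf : ContDiff ℝ (⊤ : ℕ∞) f)
    (hvan : ∀ x : ℝ, f (x, x ^ 2) = 0) :
    ∃ g : ℝ × ℝ → ℝ, ContDiff ℝ (⊤ : ℕ∞) g ∧ ∀ p : ℝ × ℝ, f p = g p * (p.2 - p.1 ^ 2) := by
  have hψ : ContDiff ℝ (⊤ : ℕ∞) (fun q : ℝ × ℝ => ((q.1, q.2 + q.1 ^ 2) : ℝ × ℝ)) :=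
    contDiff_fst.prodMk (contDiff_snd.add (contDiff_fst.pow 2))
  have hFd : ContDiff ℝ (⊤ : ℕ∞) (fun q : ℝ × ℝ => f (q.1, q.2 + q.1 ^ 2)) := hf.comp hψ
  obtain ⟨G, hG, hFG⟩ := smooth_div_snd _ hFd
    (fun u => by simpa using hvan u)
  refine ⟨fun p => G (p.1, p.2 - p.1 ^ 2), ?_, ?_⟩
  · exact hG.comp (contDiff_fst.prodMk (contDiff_snd.sub (contDiff_fst.pow 2)))
  · intro p
    have h := hFG (p.1, p.2 - p.1 ^ 2)
    simp only [sub_add_cancel] at h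
    rw [show ((p.1, p.2) : ℝ × ℝ) = p from rfl] at h
    rw [h, mul_comm]
end
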